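/- Let \eta be the linear map on Z\langle a,b\rangle with \eta(b^m a^k) = 2 (a-b)^{m+k} and \eta(v) = 0 for ab-monomials not of the form b^m a^k. Then for any graded poset P, \eta(\Psi(P)) = Z(P) \cdot (a-b)^{\rho(P)-1}, where Z(P) = \sum_{x \in P} (-1)^{\rho(x)} \mu(\hat{0},x). -/

import Mathlib

open Finset

/-- The ring `ℤ⟨a,b⟩` of noncommutative polynomials in the variables `a` and `b`,
realized as the monoid algebra of the free monoid on two letters
(`false` encodes the letter `a` and `true` the letter `b`). -/
abbrev AB : Type := MonoidAlgebra ℤ (FreeMonoid Bool)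

/-- The variable `a`. -/
noncomputable def aV : AB := MonoidAlgebra.single (FreeMonoid.ofList [false]) 1

/-- The variable `b`. -/
noncomputable def bV : AB := MonoidAlgebra.single (FreeMonoid.ofList [true]) 1

/-- The `ab`-monomial `u_S` of degree `n`, with `b` in the positions of `S`. -/
def word (n : ℕ) (S : Finset ℕ) : FreeMonoid Bool :=
  FreeMonoid.ofList (List.ofFn fun i : Fin n => decide ((i : ℕ) + 1 ∈ S))

/-- The flag `f`-vector entry `f_S`. -/
noncomputable def flagF (P : Type*) [PartialOrder P] (ρ : P → ℕ) (S : Finset ℕ) : ℤ :=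
  ({c : Finset P | IsChain (· ≤ ·) (↑c : Set P) ∧ c.image ρ = S} : Set (Finset P)).ncard

/-- The flag `h`-vector entry `h_S`. -/
noncomputable def flagH (P : Type*) [PartialOrder P] (ρ : P → ℕ) (S : Finset ℕ) : ℤ :=
  ∑ T ∈ S.powerset, (-1) ^ (S.card - T.card) * flagF P ρ T

/-- The `ab`-index `Ψ(P) = ∑_S h_S u_S` of a poset `P` of rank `n+1` with rank
function `ρ` (the elements of ranks `1,…,n` are the proper part of `P`). -/
noncomputable def Psi (P : Type*) [PartialOrder P] (ρ : P → ℕ) (n : ℕ) : AB :=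
  ∑ S ∈ (Finset.Icc 1 n).powerset, MonoidAlgebra.single (word n S) (flagH P ρ S)


open scoped Classical

/-- Extend a function on `ab`-monomials linearly to all of `ℤ⟨a,b⟩`. -/
noncomputable def extendMon (g : List Bool → AB) : AB → AB := fun w =>
  w.coeff.sum fun m c => c • g (FreeMonoid.toList m)

/-- The Möbius function of a finite poset. -/
noncomputable def muP (P : Type*) [PartialOrder P] [Fintype P] (x y : P) : ℤ :=
  letI := Classical.decEq P
  letI : DecidableRel (α := P) (· < ·) := Classical.decRel _
  letI : DecidableRel (α := P) (· ≤ ·) := Classical.decRel _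
  letI := Fintype.toLocallyFiniteOrder (α := P)
  IncidenceAlgebra.mu ℤ x y

/-- The map `η`, sending `b^m a^k ↦ 2(a-b)^{m+k}` and all other monomials to `0`. -/
noncomputable def etaMon (l : List Bool) : AB :=
  if ∃ m k : ℕ, l = List.replicate m true ++ List.replicate k false then
    2 * (aV - bV) ^ l.length
  else 0

/-!
The map `η` kills every monomial `u_S` except `u_{[m]} = b^m a^{n-m}`, so
`η(Ψ(P)) = 2 ∑_{m=0}^{n} h_{[m]} (a-b)^n`. By Philip Hall's theorem the alternating count of the
chains of the rank selection `P_{[m]}` equals `∑_{ρ(x) ≤ m} μ(0̂,x)`, whence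
`h_{[m]} = (-1)^m ∑_{ρ(x) ≤ m} μ(0̂,x)`. Exchanging the two sums, each `x ≠ 1̂` contributes
`((-1)^{ρ(x)} + (-1)^n) μ(0̂,x)`, and `∑_{x ≠ 1̂} μ(0̂,x) = -μ(0̂,1̂)` turns this into `Z(P)`.
-/

lemma extendMon_single (g : List Bool → AB) (m : FreeMonoid Bool) (c : ℤ) :
    extendMon g (MonoidAlgebra.single m c) = c • g m.toList :=
  Finsupp.sum_single_index (by simp)

lemma extendMon_sum {ι : Type*} (g : List Bool → AB) (s : Finset ι) (f : ι → AB) :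
    extendMon g (∑ i ∈ s, f i) = ∑ i ∈ s, extendMon g (f i) := by
  induction s using Finset.induction_on with
  | empty => simp [extendMon]
  | insert _ _ h ih =>
    rw [sum_insert h, sum_insert h, ← ih]
    exact Finsupp.sum_add_index' (by simp) fun _ c₁ c₂ => add_smul c₁ c₂ _

lemma toList_word (n : ℕ) (S : Finset ℕ) :
    (word n S).toList = List.ofFn fun i : Fin n => decide ((i : ℕ) + 1 ∈ S) := rfl

lemma toList_word_Icc {n m : ℕ} (hm : m ≤ n) :
    (word n (Icc 1 m)).toList = List.replicate m true ++ List.replicate (n - m) false := by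
  refine List.ext_getElem (by simp [toList_word, Nat.add_sub_cancel' hm]) fun i hi _ => ?_
  simp only [toList_word, List.getElem_ofFn, mem_Icc, List.getElem_append, List.length_replicate,
    List.getElem_replicate]
  split_ifs <;> simp <;> omega

lemma word_injOn {n : ℕ} {S S' : Finset ℕ} (hS : S ⊆ Icc 1 n) (hS' : S' ⊆ Icc 1 n)
    (h : word n S = word n S') : S = S' := by
  have hfun := List.ofFn_inj.1 (congrArg FreeMonoid.toList h)
  ext j
  by_cases hj : j ∈ Icc 1 n
  · rw [mem_Icc] at hj
    have := congrFun hfun ⟨j - 1, by omega⟩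
    simpa [Nat.sub_add_cancel hj.1] using this
  · exact iff_of_false (fun h => hj (hS h)) (fun h => hj (hS' h))

lemma etaMon_word {n : ℕ} {S : Finset ℕ} (hS : S ⊆ Icc 1 n) :
    etaMon (word n S).toList =
      if S ∈ (range (n + 1)).image (Icc 1) then 2 * (aV - bV) ^ n else 0 := by
  have hlen : (word n S).toList.length = n := by simp [toList_word]
  rw [etaMon, hlen]
  congr 1
  simp only [mem_image, mem_range, Nat.lt_succ_iff, eq_iff_iff]
  constructor
  · rintro ⟨m, k, h⟩
    have hmk : m + k = n := by simpa [hlen] using (congrArg List.length h).symm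
    obtain rfl : k = n - m := by omega
    rw [← toList_word_Icc (by omega)] at h
    exact ⟨m, by omega, word_injOn (Icc_subset_Icc le_rfl (by omega)) hS
      (FreeMonoid.toList.injective h).symm⟩
  · rintro ⟨m, hm, rfl⟩
    exact ⟨m, n - m, toList_word_Icc hm⟩

lemma extendMon_etaMon_Psi (P : Type*) [PartialOrder P] (ρ : P → ℕ) (n : ℕ) :
    extendMon etaMon (Psi P ρ n) =
      (2 * ∑ m ∈ range (n + 1), flagH P ρ (Icc 1 m)) • (aV - bV) ^ n := by
  have himage : (range (n + 1)).image (Icc 1) ⊆ (Icc 1 n).powerset := by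
    simp only [image_subset_iff, mem_range, mem_powerset]
    exact fun m hm => Icc_subset_Icc le_rfl (by omega)
  have hinj : Set.InjOn (Icc 1) (range (n + 1) : Set ℕ) := fun m _ m' _ h => by
    simpa using congrArg card h
  rw [Psi, extendMon_sum, mul_sum, sum_smul]
  calc ∑ S ∈ (Icc 1 n).powerset, extendMon etaMon (MonoidAlgebra.single (word n S) (flagH P ρ S))
      = ∑ S ∈ (Icc 1 n).powerset, if S ∈ (range (n + 1)).image (Icc 1)
          then flagH P ρ S • (2 * (aV - bV) ^ n) else 0 :=
        sum_congr rfl fun S hS => by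
          rw [extendMon_single, etaMon_word (mem_powerset.1 hS), smul_ite, smul_zero]
    _ = ∑ m ∈ range (n + 1), flagH P ρ (Icc 1 m) • (2 * (aV - bV) ^ n) := by
        rw [sum_ite_mem, inter_eq_right.2 himage, sum_image hinj]
    _ = _ := sum_congr rfl fun m _ => by
        rw [mul_comm, mul_smul, two_smul, two_mul]

namespace Finset

variable {α : Type*} [PartialOrder α]

noncomputable def chains (s : Finset α) : Finset (Finset α) :=
  {c ∈ s.powerset | IsChain (· ≤ ·) (c : Set α)}

/-- Minus the reduced Euler characteristic of the order complex of `s`. -/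
noncomputable def chainEuler (s : Finset α) : ℤ :=
  ∑ c ∈ s.chains, (-1) ^ c.card

lemma mem_chains {s c : Finset α} : c ∈ s.chains ↔ c ⊆ s ∧ IsChain (· ≤ ·) (c : Set α) := by
  simp [chains]

lemma exists_isGreatest_of_isChain {c : Finset α} (hc : IsChain (· ≤ ·) (c : Set α))
    (hne : c.Nonempty) : ∃ z, IsGreatest (c : Set α) z := by
  obtain ⟨z, hz⟩ := c.exists_maximal hne
  refine ⟨z, hz.prop, fun y hy => ?_⟩
  rcases eq_or_ne y z with rfl | hyz
  · exact le_rfl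
  · exact (hc hy hz.prop hyz).elim id (hz.le_of_ge hy)

lemma card_image_of_isChain {β : Type*} [Preorder β] [DecidableEq β] {f : α → β}
    (hf : StrictMono f) {c : Finset α} (hc : IsChain (· ≤ ·) (c : Set α)) :
    (c.image f).card = c.card := by
  refine card_image_of_injOn fun x hx y hy hxy => by_contra fun hne => ?_
  rcases hc hx hy hne with h | h
  · exact (hf (h.lt_of_ne hne)).ne hxy
  · exact (hf (h.lt_of_ne (Ne.symm hne))).ne' hxy

lemma sum_chains_by_greatest {M : Type*} [AddCommMonoid M] (s : Finset α) (F : Finset α → M) :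
    ∑ c ∈ s.chains, F c = F ∅ + ∑ z ∈ s, ∑ c ∈ {y ∈ s | y < z}.chains, F (insert z c) := by
  rw [← add_sum_erase _ _ (mem_chains.2 ⟨empty_subset s, by simp⟩), sum_sigma']
  congr 1
  symm
  refine sum_bij (fun p _ => insert p.1 p.2) (fun ⟨z, c⟩ hp => ?_)
    (fun ⟨z, c⟩ hp ⟨z', c'⟩ hp' h => ?_) (fun d hd => ?_) (fun _ _ => rfl)
  · simp only [mem_sigma, mem_chains, subset_iff, mem_filter] at hp
    obtain ⟨hz, hcs, hc⟩ := hp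
    refine mem_erase.2 ⟨insert_ne_empty z c,
      mem_chains.2 ⟨insert_subset hz fun y hy => (hcs hy).1, ?_⟩⟩
    rw [coe_insert]
    exact hc.insert fun y hy _ => Or.inr (hcs hy).2.le
  · simp only [mem_sigma, mem_chains, subset_iff, mem_filter] at hp hp'
    have hz : z ∉ c := fun h => lt_irrefl z (hp.2.1 h).2
    have hz' : z' ∉ c' := fun h => lt_irrefl z' (hp'.2.1 h).2
    obtain rfl : z = z' := by
      have h₁ : z ∈ insert z' c' := h ▸ mem_insert_self z c
      have h₂ : z' ∈ insert z c := h ▸ mem_insert_self z' c'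
      rcases mem_insert.1 h₁ with h₁ | h₁
      · exact h₁
      rcases mem_insert.1 h₂ with h₂ | h₂
      · exact h₂.symm
      exact absurd ((hp'.2.1 h₁).2.trans (hp.2.1 h₂).2) (lt_irrefl z)
    rw [← erase_insert hz, h, erase_insert hz']
  · obtain ⟨hne, hd⟩ := mem_erase.1 hd
    obtain ⟨hds, hchain⟩ := mem_chains.1 hd
    obtain ⟨z, hz, hmax⟩ := exists_isGreatest_of_isChain hchain (nonempty_iff_ne_empty.2 hne)
    refine ⟨⟨z, d.erase z⟩, mem_sigma.2 ⟨hds hz, mem_chains.2 ⟨fun y hy => ?_, ?_⟩⟩,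
      insert_erase hz⟩
    · obtain ⟨hyz, hy⟩ := mem_erase.1 hy
      exact mem_filter.2 ⟨hds hy, (hmax hy).lt_of_ne hyz⟩
    · exact hchain.mono (by simp)

lemma chainEuler_eq_one_sub_sum (s : Finset α) :
    chainEuler s = 1 - ∑ z ∈ s, chainEuler {y ∈ s | y < z} := by
  rw [chainEuler, sum_chains_by_greatest, card_empty, pow_zero, sub_eq_add_neg, ← sum_neg_distrib]
  congr 1
  refine sum_congr rfl fun z _ => ?_
  rw [chainEuler, ← sum_neg_distrib]
  refine sum_congr rfl fun c hc => ?_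
  have hz : z ∉ c := fun h => lt_irrefl z (mem_filter.1 ((mem_chains.1 hc).1 h)).2
  rw [card_insert_of_notMem hz, pow_succ, mul_neg_one]

end Finset

section Mobius

variable {P : Type*} [Fintype P] [PartialOrder P]

lemma muP_apply (a b : P) :
    muP P a b = if a = b then 1 else -∑ z with a ≤ z ∧ z < b, muP P a z := by
  let _ : LocallyFiniteOrder P := Fintype.toLocallyFiniteOrder
  unfold muP
  rw [IncidenceAlgebra.mu_apply]
  congr 3
  ext z
  simp

lemma muP_self (a : P) : muP P a a = 1 := by
  rw [muP_apply, if_pos rfl]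

/-- Philip Hall's theorem. -/
theorem muP_eq_neg_chainEuler {a b : P} (hab : a < b) :
    muP P a b = -chainEuler (univ.filter fun y => a < y ∧ y < b) := by
  induction b using WellFoundedLT.induction with
  | ind b ih =>
  have hsplit : univ.filter (fun z => a ≤ z ∧ z < b) =
      insert a (univ.filter fun z => a < z ∧ z < b) := by
    ext z
    simp only [mem_filter, mem_univ, true_and, mem_insert, le_iff_eq_or_lt]
    constructor
    · rintro ⟨rfl | h, hzb⟩
      · exact Or.inl rfl
      · exact Or.inr ⟨h, hzb⟩
    · rintro (rfl | ⟨h, hzb⟩)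
      · exact ⟨Or.inl rfl, hab⟩
      · exact ⟨Or.inr h, hzb⟩
  have hlower : ∀ z ∈ univ.filter (fun y => a < y ∧ y < b),
      (univ.filter fun y => a < y ∧ y < b).filter (· < z) =
        univ.filter fun y => a < y ∧ y < z := by
    intro z hz
    ext y
    simp only [mem_filter, mem_univ, true_and] at hz ⊢
    exact ⟨fun h => ⟨h.1.1, h.2⟩, fun h => ⟨⟨h.1, h.2.trans hz.2⟩, h.2⟩⟩
  rw [muP_apply, if_neg hab.ne, hsplit, sum_insert (by simp), muP_self,
    chainEuler_eq_one_sub_sum]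
  congr 1
  rw [sub_eq_add_neg, ← sum_neg_distrib]
  congr 1
  refine sum_congr rfl fun z hz => ?_
  rw [hlower z hz, ih z (mem_filter.1 hz).2.2 (mem_filter.1 hz).2.1]

lemma sum_muP_bot_eq_chainEuler [OrderBot P] {D : Finset P} (hD : IsLowerSet (D : Set P))
    (hbot : ⊥ ∈ D) :
    ∑ x ∈ D, muP P ⊥ x = chainEuler (D.erase ⊥) := by
  rw [← add_sum_erase D _ hbot, muP_self, chainEuler_eq_one_sub_sum, sub_eq_add_neg,
    ← sum_neg_distrib]
  congr 1
  refine sum_congr rfl fun z hz => ?_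
  rw [muP_eq_neg_chainEuler (bot_lt_iff_ne_bot.2 (ne_of_mem_erase hz))]
  congr 2
  ext y
  simp only [mem_filter, mem_erase, mem_univ, true_and, bot_lt_iff_ne_bot, and_assoc]
  exact ⟨fun h => ⟨h.1, hD h.2.le (mem_of_mem_erase hz), h.2⟩, fun h => ⟨h.1, h.2.2⟩⟩

end Mobius

section FlagVector

variable {P : Type*} [Fintype P] [PartialOrder P] {ρ : P → ℕ}

lemma flagF_eq_card {B T : Finset ℕ} (hT : T ⊆ B) :
    flagF P ρ T = #{c ∈ (univ.filter fun y => ρ y ∈ B).chains | c.image ρ = T} := by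
  rw [flagF, ← Set.ncard_coe_finset]
  congr 2
  ext c
  simp only [coe_filter, mem_chains, subset_iff, mem_filter, mem_univ, true_and]
  constructor
  · rintro ⟨hc, rfl⟩
    exact ⟨⟨fun y hy => hT (mem_image_of_mem ρ hy), hc⟩, rfl⟩
  · rintro ⟨⟨-, hc⟩, rfl⟩
    exact ⟨hc, rfl⟩

lemma sum_flagF_mul (B : Finset ℕ) (G : Finset ℕ → ℤ) :
    ∑ T ∈ B.powerset, flagF P ρ T * G T =
      ∑ c ∈ (univ.filter fun y => ρ y ∈ B).chains, G (c.image ρ) := by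
  have hmaps : ∀ c ∈ (univ.filter fun y => ρ y ∈ B).chains, c.image ρ ∈ B.powerset := by
    intro c hc
    simp only [mem_powerset, image_subset_iff]
    exact fun y hy => (mem_filter.1 ((mem_chains.1 hc).1 hy)).2
  rw [← sum_fiberwise_of_maps_to' hmaps]
  refine sum_congr rfl fun T hT => ?_
  rw [flagF_eq_card (mem_powerset.1 hT), sum_const, nsmul_eq_mul]

lemma flagH_Icc_eq [OrderBot P] (hρ : StrictMono ρ) (hbot : ρ ⊥ = 0) (m : ℕ) :
    flagH P ρ (Icc 1 m) = (-1) ^ m * ∑ x with ρ x ≤ m, muP P ⊥ x := by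
  have hsign : ∀ T ∈ (Icc 1 m).powerset,
      (-1) ^ ((Icc 1 m).card - T.card) * flagF P ρ T =
        (-1) ^ m * (flagF P ρ T * (-1) ^ T.card) := by
    intro T hT
    have hle : T.card ≤ m := by simpa using card_le_card (mem_powerset.1 hT)
    have : (-1 : ℤ) ^ (m - T.card) = (-1) ^ m * (-1) ^ T.card := calc
      _ = (-1 : ℤ) ^ (m - T.card) * ((-1) ^ T.card * (-1) ^ T.card) := by
        rw [← pow_add, ← two_mul, pow_mul, neg_one_sq, one_pow, mul_one]
      _ = (-1) ^ m * (-1) ^ T.card := by rw [← mul_assoc, ← pow_add, Nat.sub_add_cancel hle]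
    rw [Nat.card_Icc, Nat.add_sub_cancel, this]
    ring
  have hlower : IsLowerSet ((univ.filter fun x => ρ x ≤ m : Finset P) : Set P) :=
    fun x y hyx hx => by
      simp only [coe_filter, mem_univ, true_and] at hx ⊢
      exact (hρ.monotone hyx).trans hx
  have hproper : (univ.filter fun x => ρ x ≤ m).erase ⊥ = univ.filter fun y => ρ y ∈ Icc 1 m := by
    ext y
    simp only [mem_erase, mem_filter, mem_univ, true_and, mem_Icc]
    refine ⟨fun h => ⟨?_, h.2⟩, fun h => ⟨fun hy => ?_, h.2⟩⟩
    · have := hρ (bot_lt_iff_ne_bot.2 h.1)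
      omega
    · rw [hy, hbot] at h; omega
  rw [flagH, sum_congr rfl hsign, ← mul_sum, sum_flagF_mul,
    sum_muP_bot_eq_chainEuler hlower (by simp [hbot]), hproper, chainEuler]
  congr 1
  exact sum_congr rfl fun c hc => by rw [card_image_of_isChain hρ (mem_chains.1 hc).2]

end FlagVector

lemma two_mul_sum_Ico_neg_one_pow {t n : ℕ} (h : t ≤ n) :
    2 * ∑ m ∈ Ico t (n + 1), (-1 : ℤ) ^ m = (-1) ^ t + (-1) ^ n := by
  linear_combination (-1 : ℤ) * geom_sum_Ico_mul (-1 : ℤ) (by omega : t ≤ n + 1)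

lemma two_mul_sum_range_neg_one_pow_mul_sum {ι : Type*} [Fintype ι] (r : ι → ℕ) (f : ι → ℤ)
    (n : ℕ) :
    2 * ∑ m ∈ range (n + 1), (-1) ^ m * ∑ x with r x ≤ m, f x =
      ∑ x with r x ≤ n, ((-1) ^ r x + (-1) ^ n) * f x := by
  simp_rw [mul_sum, sum_filter]
  rw [sum_comm]
  refine sum_congr rfl fun x _ => ?_
  rw [← sum_filter]
  split_ifs with hx
  · have hIco : {m ∈ range (n + 1) | r x ≤ m} = Ico (r x) (n + 1) := by
      ext m
      simp only [mem_filter, mem_range, mem_Ico]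
      omega
    rw [hIco, ← two_mul_sum_Ico_neg_one_pow hx, mul_sum, sum_mul]
    exact sum_congr rfl fun m _ => by ring
  · refine sum_eq_zero fun m hm => ?_
    simp only [mem_filter, mem_range] at hm
    omega

theorem eta_Psi_general (n : ℕ) (P : Type*) [Fintype P] [PartialOrder P]
    [BoundedOrder P] (ρ : P → ℕ)
    (hbot : ρ ⊥ = 0) (htop : ρ ⊤ = n + 1)
    (hstrict : ∀ x y : P, x < y → ρ x < ρ y) :
    extendMon etaMon (Psi P ρ n) =
      (∑ x : P, (-1) ^ (ρ x) * muP P (⊥ : P) x) • (aV - bV) ^ n := by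
  have hρ : StrictMono ρ := fun x y => hstrict x y
  have hle_iff : ∀ x : P, ρ x ≤ n ↔ x ≠ ⊤ := fun x =>
    ⟨by rintro h rfl; omega, fun h => by have := hρ (lt_top_iff_ne_top.2 h); omega⟩
  have hμ : muP P ⊥ ⊤ = -∑ x ∈ univ.erase ⊤, muP P ⊥ x := by
    rw [muP_apply, if_neg ((hle_iff ⊥).1 (hbot ▸ Nat.zero_le n))]
    congr 2
    ext x
    simp [lt_top_iff_ne_top]
  rw [extendMon_etaMon_Psi]
  congr 1
  calc 2 * ∑ m ∈ range (n + 1), flagH P ρ (Icc 1 m)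
      = 2 * ∑ m ∈ range (n + 1), (-1) ^ m * ∑ x with ρ x ≤ m, muP P ⊥ x := by
        simp only [flagH_Icc_eq hρ hbot]
    _ = ∑ x with ρ x ≤ n, ((-1) ^ ρ x + (-1) ^ n) * muP P ⊥ x :=
        two_mul_sum_range_neg_one_pow_mul_sum ρ _ n
    _ = ∑ x ∈ univ.erase ⊤, (-1) ^ ρ x * muP P ⊥ x + (-1) ^ ρ ⊤ * muP P ⊥ ⊤ := by
        simp_rw [hle_iff, filter_ne', add_mul, sum_add_distrib, ← mul_sum, hμ, htop, pow_succ]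
        ring
    _ = ∑ x, (-1) ^ ρ x * muP P ⊥ x := sum_erase_add _ _ (mem_univ ⊤)

/-- For a graded poset `P`, `η(Ψ(P)) = Z(P) ⬝ (a-b)^{ρ(P)-1}`, where
`Z(P) = ∑_{x ∈ P} (-1)^{ρ(x)} μ(0̂,x)`. -/
theorem eta_Psi (n : ℕ) (P : Type*) [Fintype P] [PartialOrder P]
    [BoundedOrder P] (ρ : P → ℕ)
    (hbot : ρ ⊥ = 0) (htop : ρ ⊤ = n + 1)
    (hstrict : ∀ x y : P, x < y → ρ x < ρ y)
    (hcov : ∀ x y : P, x ⋖ y → ρ y = ρ x + 1) :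
    extendMon etaMon (Psi P ρ n) =
      (∑ x : P, (-1) ^ (ρ x) * muP P (⊥ : P) x) • (aV - bV) ^ n :=
  eta_Psi_general n P ρ hbot htop hstrict
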